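/- Let P^⊥ be the linear cellular automaton shift determined by Φ. Let n_1, …, n_k ∈ ℤ^d be pairwise distinct elements all having last coordinate equal to 0, let S ⊂ ℤ^d be a finite set, and let C_1, …, C_k : S → 𝔽_p be configurations each occurring in P^⊥ (i.e., for each i there exists y ∈ P^⊥ with y(s) = C_i(s) for all s ∈ S). Then there exist x ∈ P^⊥ and m ∈ ℕ such that x(p^m·n_i + s) = C_i(s) for all 1 ≤ i ≤ k and all s ∈ S. -/

import Mathlib

open MeasureTheory Filter Topology

namespace LCA

/-- The full shift `𝔽_p^{ℤ^d}`. -/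
abbrev Full (p d : ℕ) : Type := (Fin d → ℤ) → ZMod p

/-- The shift action: `(σ_g x)(n) = x(n+g)`. -/
def shift (p d : ℕ) (g : Fin d → ℤ) (x : Full p d) : Full p d := fun n => x (n + g)

/-- `e_d = (0,…,0,1)`, the exponent of the "time" variable `X_d`. -/
def eLast (d : ℕ) : Fin d → ℤ := fun i => if (i : ℕ) = d - 1 then 1 else 0

/-- The linear cellular automaton shift `P^⊥` for `P = X_d − Φ`, as a set:
all `x` with `x(n+e_d) = Σ_{m ∈ S(Φ)} Φ(m)·x(n+m)` for every `n`. -/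
def Pperp (p d : ℕ) (Φ : (Fin d → ℤ) →₀ ZMod p) : Set (Full p d) :=
  {x | ∀ n : Fin d → ℤ, x (n + eLast d) = ∑ m ∈ Φ.support, Φ m * x (n + m)}

/-- `P^⊥` as a closed, shift-invariant subgroup of the full shift. -/
def PperpGroup (p d : ℕ) (Φ : (Fin d → ℤ) →₀ ZMod p) : AddSubgroup (Full p d) where
  carrier := Pperp p d Φ
  zero_mem' := by intro n; simp
  add_mem' := by
    intro x y hx hy n
    simp only [Pi.add_apply, hx n, hy n, mul_add, Finset.sum_add_distrib]
  neg_mem' := by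
    intro x hx n
    simp only [Pi.neg_apply, hx n, mul_neg, Finset.sum_neg_distrib, neg_inj]

lemma shift_mem_Pperp (p d : ℕ) (Φ : (Fin d → ℤ) →₀ ZMod p) (g : Fin d → ℤ)
    {x : Full p d} (hx : x ∈ Pperp p d Φ) : shift p d g x ∈ Pperp p d Φ := by
  intro n
  simpa [shift, add_right_comm] using hx (n + g)

/-- The shift action restricted to `P^⊥`. -/
def shiftSub (p d : ℕ) (Φ : (Fin d → ℤ) →₀ ZMod p) (g : Fin d → ℤ)
    (x : PperpGroup p d Φ) : PperpGroup p d Φ :=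
  ⟨shift p d g x.1, shift_mem_Pperp p d Φ g x.2⟩

end LCA

open LCA

/-! Since `Φ` does not involve the last variable, a point `x` of `P^⊥` is determined by its values
on a single level `{n_d = a}` through `x(n + t e_d) = (L^t x)(n)`, where `L x = Σ_m Φ(m) x(· + m)`.
Conversely `L` is surjective (on finitely many cells one solves a triangular system, using a
monomial of `Φ` that is a unique sum, and compactness of the full shift gives the rest), so
arbitrary data on one level extends to a point of `P^⊥`. The values of `x` on `S` only depend on
a finite window of that level; once `p^m` exceeds the diameter of the window, its translates by
the `p^m n_i` are disjoint, and the data of the `C_i` can be written on them independently. -/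

open scoped Pointwise

theorem Function.Surjective.exists_int_orbit {α : Type*} {T : α → α}
    (hT : Function.Surjective T) (a : α) :
    ∃ s : ℤ → α, s 0 = a ∧ ∀ k, s (k + 1) = T (s k) := by
  set B := Function.surjInv hT
  refine ⟨fun k => if 0 ≤ k then T^[k.toNat] a else B^[(-k).toNat] a, by simp, fun k => ?_⟩
  dsimp only
  rcases le_or_gt 0 k with hk | hk
  · rw [if_pos (by omega), if_pos hk, show (k + 1).toNat = k.toNat + 1 by omega,
      Function.iterate_succ_apply']
  · obtain ⟨j, rfl⟩ : ∃ j : ℕ, k = -(j + 1) := ⟨(-k - 1).toNat, by omega⟩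
    have hB : T (B^[j + 1] a) = B^[j] a := by
      rw [Function.iterate_succ_apply', Function.surjInv_eq hT]
    rw [if_neg hk.not_ge, show (-(-((j : ℤ) + 1))).toNat = j + 1 by omega, hB]
    rcases j with _ | j
    · simp
    · rw [if_neg (by omega)]
      exact congrArg (B^[·] a) (by omega)

namespace LCA

section Rule

variable {G K : Type*} [AddCommGroup G]

section CommSemiring

variable [CommSemiring K] {Φ : G →₀ K} {e : G} {x y : G → K}

def rule (Φ : G →₀ K) : (G → K) →ₗ[K] (G → K) where
  toFun x n := ∑ m ∈ Φ.support, Φ m * x (n + m)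
  map_add' x y := by ext n; simp [mul_add, Finset.sum_add_distrib]
  map_smul' c x := by ext n; simp [Finset.mul_sum, mul_left_comm]

@[simp]
lemma rule_apply (Φ : G →₀ K) (x : G → K) (n : G) :
    rule Φ x n = ∑ m ∈ Φ.support, Φ m * x (n + m) := rfl

/-- `P^⊥` for `P = X^e - Φ`; `Pperp p d Φ` is `cellularShift Φ (eLast d)` by definition. -/
def cellularShift (Φ : G →₀ K) (e : G) : Set (G → K) :=
  {x | ∀ n, x (n + e) = rule Φ x n}

lemma apply_add_nsmul_eq_rule_pow_apply (hx : x ∈ cellularShift Φ e) (t : ℕ) (n : G) :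
    x (n + t • e) = (rule Φ ^ t) x n := by
  induction t generalizing n with
  | zero => simp
  | succ t ih =>
    rw [succ_nsmul, ← add_assoc, hx, pow_succ', Module.End.mul_apply, rule_apply, rule_apply]
    refine Finset.sum_congr rfl fun m _ => ?_
    rw [add_right_comm, ih]

lemma rule_pow_apply_congr [DecidableEq G] (t : ℕ) {n n' : G}
    (h : ∀ g ∈ t • Φ.support, x (n + g) = y (n' + g)) :
    (rule Φ ^ t) x n = (rule Φ ^ t) y n' := by
  induction t generalizing n n' with
  | zero => simpa using h 0 (by simp)
  | succ t ih =>
    rw [pow_succ', Module.End.mul_apply, Module.End.mul_apply, rule_apply, rule_apply]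
    refine Finset.sum_congr rfl fun m hm => congrArg _ (ih fun g hg => ?_)
    rw [add_assoc, add_assoc, add_comm m]
    exact h _ (succ_nsmul Φ.support t ▸ Finset.add_mem_add hg hm)

lemma apply_add_nsmul_congr [DecidableEq G] (hx : x ∈ cellularShift Φ e)
    (hy : y ∈ cellularShift Φ e) (t : ℕ) {n n' : G}
    (h : ∀ g ∈ t • Φ.support, x (n + g) = y (n' + g)) : x (n + t • e) = y (n' + t • e) := by
  rw [apply_add_nsmul_eq_rule_pow_apply hx, apply_add_nsmul_eq_rule_pow_apply hy,
    rule_pow_apply_congr t h]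

theorem exists_mem_cellularShift_eqOn_level (hsurj : Function.Surjective (rule Φ))
    (τ : G →+ ℤ) (hτe : τ e = 1) (hτΦ : ∀ m ∈ Φ.support, τ m = 0) (f : G → K) (a : ℤ) :
    ∃ x ∈ cellularShift Φ e, ∀ w, τ w = a → x w = f w := by
  have hstep : Function.Surjective fun y : G → K => fun w => rule Φ y (w - e) := fun z => by
    obtain ⟨y, hy⟩ := hsurj fun w => z (w + e)
    exact ⟨y, funext fun w => by simp only [hy, sub_add_cancel]⟩
  -- the rows `s k`, read on the level `τ = a + k`, are successive images under the step map
  obtain ⟨s, hs0, hs⟩ := hstep.exists_int_orbit f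
  refine ⟨fun w => s (τ w - a) w, fun n => ?_, fun w hw => by simp [hw, hs0]⟩
  change s (τ (n + e) - a) (n + e) = _
  rw [map_add, hτe, show τ n + 1 - a = τ n - a + 1 by ring, hs]
  simp only [add_sub_cancel_right, rule_apply]
  refine Finset.sum_congr rfl fun m hm => ?_
  rw [map_add, hτΦ m hm, add_zero]

variable [DecidableEq G]

def window (Φ : G →₀ K) (e : G) (τ : G →+ ℤ) (a : ℤ) (S : Finset G) : Finset G :=
  S.biUnion fun s => ((τ s - a).toNat • Φ.support).image (s - (τ s - a).toNat • e + ·)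

lemma apply_add_eq_of_eqOn_window (hx : x ∈ cellularShift Φ e) (hy : y ∈ cellularShift Φ e)
    {τ : G →+ ℤ} {a : ℤ} {S : Finset G} {v : G}
    (h : ∀ r ∈ window Φ e τ a S, x (v + r) = y r) {s : G} (hs : s ∈ S) : x (v + s) = y s := by
  set t := (τ s - a).toNat
  have := apply_add_nsmul_congr hx hy t (n := v + (s - t • e)) (n' := s - t • e) fun g hg => by
    rw [add_assoc]
    exact h _ (Finset.mem_biUnion.mpr ⟨s, hs, Finset.mem_image_of_mem _ hg⟩)
  rwa [add_assoc, sub_add_cancel] at this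

lemma map_eq_zero_of_mem_nsmul {τ : G →+ ℤ} {A : Finset G} (hA : ∀ m ∈ A, τ m = 0) :
    ∀ (t : ℕ), ∀ g ∈ t • A, τ g = 0
  | 0, g, hg => by simp_all
  | t + 1, g, hg => by
    rw [succ_nsmul] at hg
    obtain ⟨g', hg', m, hm, rfl⟩ := Finset.mem_add.mp hg
    rw [map_add, map_eq_zero_of_mem_nsmul hA t g' hg', hA m hm, add_zero]

lemma map_eq_of_mem_window {τ : G →+ ℤ} (hτe : τ e = 1) (hτΦ : ∀ m ∈ Φ.support, τ m = 0)
    {a : ℤ} {S : Finset G} (hS : ∀ s ∈ S, a ≤ τ s) {r : G} (hr : r ∈ window Φ e τ a S) :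
    τ r = a := by
  obtain ⟨s, hs, hr⟩ := Finset.mem_biUnion.mp hr
  obtain ⟨g, hg, rfl⟩ := Finset.mem_image.mp hr
  rw [map_add, map_sub, map_nsmul, hτe, map_eq_zero_of_mem_nsmul hτΦ _ g hg, nsmul_one,
    Int.toNat_of_nonneg (sub_nonneg.mpr (hS s hs))]
  ring

theorem exists_mem_cellularShift_forall_translate {ι : Type*} [Fintype ι]
    (hsurj : Function.Surjective (rule Φ)) {τ : G →+ ℤ} (hτe : τ e = 1)
    (hτΦ : ∀ m ∈ Φ.support, τ m = 0) {a : ℤ} {S : Finset G} (hS : ∀ s ∈ S, a ≤ τ s)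
    {y : ι → G → K} (hy : ∀ i, y i ∈ cellularShift Φ e) {v : ι → G} (hv : ∀ i, τ (v i) = 0)
    (hsep : Pairwise fun i j => v i - v j ∉ window Φ e τ a S - window Φ e τ a S) :
    ∃ x ∈ cellularShift Φ e, ∀ i, ∀ s ∈ S, x (v i + s) = y i s := by
  set W := window Φ e τ a S
  obtain ⟨x, hx, hxW⟩ := exists_mem_cellularShift_eqOn_level hsurj τ hτe hτΦ
    (fun w => ∑ j, (W : Set G).indicator (y j) (w - v j)) a
  refine ⟨x, hx, fun i s hs =>
    apply_add_eq_of_eqOn_window (τ := τ) (a := a) hx (hy i) (fun r hr => ?_) hs⟩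
  rw [hxW _ (by rw [map_add, hv, map_eq_of_mem_window hτe hτΦ hS hr, zero_add]),
    Finset.sum_eq_single i]
  · simp [W, hr]
  · refine fun j _ hji => Set.indicator_of_notMem (fun hmem => hsep hji.symm ?_) _
    exact Finset.mem_sub.mpr ⟨_, hmem, r, hr, by abel⟩
  · simp

end CommSemiring

section Field

variable [Field K] {Φ : G →₀ K}

lemma exists_rule_eqOn_finset [UniqueSums G] [DecidableEq G] (hΦ : Φ ≠ 0) (h : G → K)
    (N : Finset G) : ∃ f : G → K, ∀ n ∈ N, rule Φ f n = h n := by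
  induction N using Finset.strongInduction with
  | H N ih =>
  rcases N.eq_empty_or_nonempty with rfl | hN
  · exact ⟨0, by simp⟩
  obtain ⟨n₀, hn₀, g₀, hg₀, huniq⟩ :=
    UniqueSums.uniqueAdd_of_nonempty hN (Finsupp.support_nonempty_iff.mpr hΦ)
  obtain ⟨f, hf⟩ := ih _ (N.erase_ssubset hn₀)
  -- `n₀ + g₀` is reached from `N + supp Φ` only as `n₀ + g₀`, so changing `f` there only
  -- affects `rule Φ f n₀`.
  have hδ : ∀ n ∈ N, rule Φ (Pi.single (n₀ + g₀) 1) n = if n = n₀ then Φ g₀ else 0 := by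
    intro n hn
    rw [rule_apply, Finset.sum_eq_single g₀]
    · simp [Pi.single_apply]
    · intro m hm hmg
      rw [Pi.single_eq_of_ne (fun heq => hmg (huniq hn hm heq).2), mul_zero]
    · exact fun h => absurd hg₀ h
  refine ⟨f + ((Φ g₀)⁻¹ * (h n₀ - rule Φ f n₀)) • Pi.single (n₀ + g₀) 1, fun n hn => ?_⟩
  rw [map_add, map_smul, Pi.add_apply, Pi.smul_apply, hδ n hn, smul_eq_mul]
  split_ifs with hn₀'
  · subst hn₀'
    field_simp [Finsupp.mem_support_iff.mp hg₀]
    ring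
  · rw [mul_zero, add_zero, hf n (Finset.mem_erase.mpr ⟨hn₀', hn⟩)]

theorem rule_surjective [Finite K] [UniqueSums G] (hΦ : Φ ≠ 0) :
    Function.Surjective (rule Φ) := by
  classical
  let _ : TopologicalSpace K := ⊥
  have : DiscreteTopology K := ⟨rfl⟩
  intro h
  have hclosed : ∀ n, IsClosed {f : G → K | rule Φ f n = h n} := fun n =>
    isClosed_eq (continuous_finsetSum _ fun m _ => continuous_const.mul (continuous_apply _))
      continuous_const
  obtain ⟨f, -, hf⟩ := isCompact_univ.inter_iInter_nonempty _ hclosed fun N => by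
    obtain ⟨f, hf⟩ := exists_rule_eqOn_finset hΦ h N
    exact ⟨f, trivial, Set.mem_iInter₂.mpr hf⟩
  exact ⟨f, funext (Set.mem_iInter.mp hf)⟩

end Field

end Rule

theorem eventually_forall_nsmul_notMem {ι : Type*} [Fintype ι] (D : Finset (ι → ℤ)) :
    ∀ᶠ N : ℕ in atTop, ∀ u : ι → ℤ, u ≠ 0 → N • u ∉ D := by
  refine eventually_gt_atTop (D.sup fun v => ∑ c, (v c).natAbs) |>.mono fun N hN u hu hmem => ?_
  obtain ⟨c, hc⟩ := Function.ne_iff.mp hu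
  have hle : N ≤ ((N • u) c).natAbs := by
    rw [Pi.smul_apply, nsmul_eq_mul, Int.natAbs_mul, Int.natAbs_natCast]
    exact Nat.le_mul_of_pos_right N (Int.natAbs_pos.mpr hc)
  have := (Finset.single_le_sum (fun c' _ => Nat.zero_le ((N • u) c').natAbs)
    (Finset.mem_univ c)).trans (Finset.le_sup (f := fun v => ∑ c, (v c).natAbs) hmem)
  omega

end LCA

/-- Let `P^⊥` be the linear cellular automaton shift determined by `Φ`.
Let `n_1,…,n_k ∈ ℤ^d` be pairwise distinct with last coordinate `0`, let `S ⊂ ℤ^d` be a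
finite set, and let `C_1,…,C_k : S → 𝔽_p` be configurations each occurring in `P^⊥`.
Then there exist `x ∈ P^⊥` and `m ∈ ℕ` such that `x(p^m·n_i + s) = C_i(s)` for all `i`
and all `s ∈ S`. -/
theorem scaled_configurations_occur (p d : ℕ) [Fact p.Prime] (hd : 2 ≤ d)
    (Φ : (Fin d → ℤ) →₀ ZMod p)
    (hΦsupp : ∀ m ∈ Φ.support, m ⟨d - 1, by omega⟩ = 0)
    (hΦ2 : 2 ≤ Φ.support.card)
    (k : ℕ) (ns : Fin k → (Fin d → ℤ)) (hinj : Function.Injective ns)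
    (hlast : ∀ i, ns i ⟨d - 1, by omega⟩ = 0)
    (S : Finset (Fin d → ℤ)) (C : Fin k → (Fin d → ℤ) → ZMod p)
    (hC : ∀ i, ∃ y ∈ Pperp p d Φ, ∀ s ∈ S, y s = C i s) :
    ∃ x ∈ Pperp p d Φ, ∃ m : ℕ,
      ∀ i : Fin k, ∀ s ∈ S, x ((p ^ m : ℕ) • ns i + s) = C i s := by
  classical
  set τ : (Fin d → ℤ) →+ ℤ := Pi.evalAddMonoidHom (fun _ => ℤ) ⟨d - 1, by omega⟩
  have hτe : τ (eLast d) = 1 := by simp [τ, eLast]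
  have hsurj : Function.Surjective (rule Φ) :=
    rule_surjective fun hΦ => by simp [hΦ] at hΦ2
  choose y hy hyS using hC
  obtain ⟨a, ha⟩ := (S.image τ).bddBelow
  set W := window Φ (eLast d) τ a S
  obtain ⟨m, hm⟩ := ((tendsto_pow_atTop_atTop_of_one_lt (Fact.out : p.Prime).one_lt).eventually
    (eventually_forall_nsmul_notMem (W - W))).exists
  obtain ⟨x, hx, hxy⟩ := exists_mem_cellularShift_forall_translate hsurj hτe hΦsupp
    (fun s hs => ha (Finset.mem_coe.mpr (Finset.mem_image_of_mem τ hs))) hy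
    (v := fun i => (p ^ m : ℕ) • ns i) (fun i => by simp [τ, hlast])
    fun i j hij => by
      simpa only [← smul_sub] using hm _ (sub_ne_zero.mpr (hinj.ne hij))
  exact ⟨x, hx, m, fun i s hs => (hxy i s hs).trans (hyS i s hs)⟩
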